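/- Implication versus equivalence in flat NNF formulas: let Ψ = ∃{κ_1,…,κ_m}.( Φ_0 ∧ ⋀_{i=1..m} AG( κ_i → θ_i ) ) and Ψ̃ = ∃{κ_1,…,κ_m}.( Φ_0 ∧ ⋀_{i=1..m} AG( κ_i ↔ θ_i ) ), where Φ_0 and the θ_i are QCTL formulas in negation normal form, the κ_i are fresh atomic propositions, and each κ_i occurs in Φ_0 and in the θ_j only positively (never in the scope of a negation), its only other occurrence being as the left-hand side of AG( κ_i → θ_i ). Then Ψ ≡ Ψ̃. -/

import Mathlib

open Classical

/-- Syntax of QCTL: `φ ::= q | ¬φ | φ∨ψ | EX φ | E φ U ψ | A φ U ψ | ∃p.φ`. -/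
inductive QCTL (AP : Type) : Type where
  | atom : AP → QCTL AP
  | qneg : QCTL AP → QCTL AP
  | qor  : QCTL AP → QCTL AP → QCTL AP
  | qEX  : QCTL AP → QCTL AP
  | qEU  : QCTL AP → QCTL AP → QCTL AP
  | qAU  : QCTL AP → QCTL AP → QCTL AP
  | qexi : AP → QCTL AP → QCTL AP

/-- A Kripke structure over atomic propositions `AP` with (finite) state space `V`:
a serial edge relation and a labelling function. -/
structure Kripke (AP V : Type) where
  E : V → V → Prop
  serial : ∀ v, ∃ w, E v w
  label : V → Set AP

variable {AP V : Type}

/-- `K'` agrees with `K` (same edges) except possibly on the labelling of `p`. -/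
def Kripke.AgreeExcept (K K' : Kripke AP V) (p : AP) : Prop :=
  K'.E = K.E ∧ ∀ v q, q ≠ p → (q ∈ K'.label v ↔ q ∈ K.label v)

/-- Structure semantics of QCTL. -/
def QCTL.sat : QCTL AP → Kripke AP V → V → Prop
  | .atom p, K, x => p ∈ K.label x
  | .qneg φ, K, x => ¬ φ.sat K x
  | .qor φ ψ, K, x => φ.sat K x ∨ ψ.sat K x
  | .qEX φ, K, x => ∃ y, K.E x y ∧ φ.sat K y
  | .qEU φ ψ, K, x => ∃ ρ : ℕ → V, ρ 0 = x ∧ (∀ i, K.E (ρ i) (ρ (i + 1))) ∧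
      ∃ i, ψ.sat K (ρ i) ∧ ∀ j < i, φ.sat K (ρ j)
  | .qAU φ ψ, K, x => ∀ ρ : ℕ → V, ρ 0 = x → (∀ i, K.E (ρ i) (ρ (i + 1))) →
      ∃ i, ψ.sat K (ρ i) ∧ ∀ j < i, φ.sat K (ρ j)
  | .qexi p φ, K, x => ∃ K' : Kripke AP V, K.AgreeExcept K' p ∧ φ.sat K' x

namespace QCTL

def qand (φ ψ : QCTL AP) : QCTL AP := qneg (qor (qneg φ) (qneg ψ))
def qimp (φ ψ : QCTL AP) : QCTL AP := qor (qneg φ) ψ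
def qiff (φ ψ : QCTL AP) : QCTL AP := qand (qimp φ ψ) (qimp ψ φ)
def qtop [Inhabited AP] : QCTL AP := qor (atom default) (qneg (atom default))
def qbot [Inhabited AP] : QCTL AP := qneg qtop
def qAX (φ : QCTL AP) : QCTL AP := qneg (qEX (qneg φ))
def qEF [Inhabited AP] (φ : QCTL AP) : QCTL AP := qEU qtop φ
def qAG [Inhabited AP] (φ : QCTL AP) : QCTL AP := qneg (qEF (qneg φ))
def qall (p : AP) (φ : QCTL AP) : QCTL AP := qneg (qexi p (qneg φ))

/-- All atomic propositions occurring in a formula (free or bound). -/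
def atoms : QCTL AP → Set AP
  | atom p => {p}
  | qneg φ => φ.atoms
  | qor φ ψ => φ.atoms ∪ ψ.atoms
  | qEX φ => φ.atoms
  | qEU φ ψ => φ.atoms ∪ ψ.atoms
  | qAU φ ψ => φ.atoms ∪ ψ.atoms
  | qexi p φ => insert p φ.atoms

/-- Size of a formula. -/
def qsize : QCTL AP → ℕ
  | atom _ => 1
  | qneg φ => φ.qsize + 1
  | qor φ ψ => φ.qsize + ψ.qsize + 1
  | qEX φ => φ.qsize + 1
  | qEU φ ψ => φ.qsize + ψ.qsize + 1
  | qAU φ ψ => φ.qsize + ψ.qsize + 1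
  | qexi _ φ => φ.qsize + 1

end QCTL

/-- Equivalence of two QCTL formulas: same truth value at every state of every
(finite) Kripke structure. -/
def QEquiv (φ ψ : QCTL AP) : Prop :=
  ∀ (V : Type) [Fintype V] (K : Kripke AP V) (x : V), φ.sat K x ↔ ψ.sat K x

/-- `∃p₁.…∃pₙ.φ` for a list of atomic propositions. -/
def exiMany {AP : Type} (l : List AP) (φ : QCTL AP) : QCTL AP := l.foldr QCTL.qexi φ

/-- Conjunction of a list of formulas, with a final base conjunct. -/
def conjList {AP : Type} (l : List (QCTL AP)) (base : QCTL AP) : QCTL AP :=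
  l.foldr QCTL.qand base

/-- Disjunction of a list of formulas, with a final base disjunct. -/
def disjList {AP : Type} (l : List (QCTL AP)) (base : QCTL AP) : QCTL AP :=
  l.foldr QCTL.qor base
/-- Boolean combinations of atomic propositions. -/
inductive BoolAtoms {AP : Type} : QCTL AP → Prop where
  | atom (p : AP) : BoolAtoms (QCTL.atom p)
  | qneg {φ} : BoolAtoms φ → BoolAtoms (QCTL.qneg φ)
  | qor {φ ψ} : BoolAtoms φ → BoolAtoms ψ → BoolAtoms (QCTL.qor φ ψ)

/-- Basic CTL formulas: `EX α`, `E α U β` or `A α U β` with `α`, `β` Boolean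
combinations of atomic propositions. -/
inductive BasicCTL {AP : Type} : QCTL AP → Prop where
  | qEX {α} : BoolAtoms α → BasicCTL (QCTL.qEX α)
  | qEU {α β} : BoolAtoms α → BoolAtoms β → BasicCTL (QCTL.qEU α β)
  | qAU {α β} : BoolAtoms α → BoolAtoms β → BasicCTL (QCTL.qAU α β)

/-- Boolean combinations of basic CTL formulas (and of atomic propositions). -/
inductive BoolCombBasic {AP : Type} : QCTL AP → Prop where
  | basic {φ} : BasicCTL φ → BoolCombBasic φ
  | atom (p : AP) : BoolCombBasic (QCTL.atom p)
  | qneg {φ} : BoolCombBasic φ → BoolCombBasic (QCTL.qneg φ)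
  | qor {φ ψ} : BoolCombBasic φ → BoolCombBasic ψ → BoolCombBasic (QCTL.qor φ ψ)

/-- Quantifier-free QCTL formulas, i.e. CTL formulas. -/
def QCTL.quantFree {AP : Type} : QCTL AP → Prop
  | .atom _ => True
  | .qneg φ => φ.quantFree
  | .qor φ ψ => φ.quantFree ∧ ψ.quantFree
  | .qEX φ => φ.quantFree
  | .qEU φ ψ => φ.quantFree ∧ ψ.quantFree
  | .qAU φ ψ => φ.quantFree ∧ ψ.quantFree
  | .qexi _ _ => False

/-- The body `Φ₀ ∧ ⋀_{i=1..m} AG( κᵢ ↔ θᵢ )` of a flat formula. -/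
def flatBody {AP : Type} [Inhabited AP] (m : ℕ) (κ : Fin m → AP)
    (Φ0 : QCTL AP) (θ : Fin m → QCTL AP) : QCTL AP :=
  conjList
    ((List.finRange m).map fun i => QCTL.qAG (QCTL.qiff (QCTL.atom (κ i)) (θ i)))
    Φ0
namespace QCTL
/-- Weak until: `E φ W ψ := ¬ A(¬ψ) U (¬ψ ∧ ¬φ)`. -/
def qEW {AP : Type} (φ ψ : QCTL AP) : QCTL AP :=
  qneg (qAU (qneg ψ) (qand (qneg ψ) (qneg φ)))
/-- Weak until: `A φ W ψ := ¬ E(¬ψ) U (¬ψ ∧ ¬φ)`. -/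
def qAW {AP : Type} (φ ψ : QCTL AP) : QCTL AP :=
  qneg (qEU (qneg ψ) (qand (qneg ψ) (qneg φ)))
end QCTL

/-- Negation normal form: negation is applied only to atomic propositions; formulas are
built from literals, `∧`, `∨`, the modalities `EX`, `AX`, `EU`, `AU`, `EW`, `AW`, and
propositional quantifiers. -/
inductive IsNNF {AP : Type} : QCTL AP → Prop where
  | atom (p : AP) : IsNNF (QCTL.atom p)
  | natom (p : AP) : IsNNF (QCTL.qneg (QCTL.atom p))
  | qand {φ ψ} : IsNNF φ → IsNNF ψ → IsNNF (QCTL.qand φ ψ)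
  | qor {φ ψ} : IsNNF φ → IsNNF ψ → IsNNF (QCTL.qor φ ψ)
  | qEX {φ} : IsNNF φ → IsNNF (QCTL.qEX φ)
  | qAX {φ} : IsNNF φ → IsNNF (QCTL.qAX φ)
  | qEU {φ ψ} : IsNNF φ → IsNNF ψ → IsNNF (QCTL.qEU φ ψ)
  | qAU {φ ψ} : IsNNF φ → IsNNF ψ → IsNNF (QCTL.qAU φ ψ)
  | qEW {φ ψ} : IsNNF φ → IsNNF ψ → IsNNF (QCTL.qEW φ ψ)
  | qAW {φ ψ} : IsNNF φ → IsNNF ψ → IsNNF (QCTL.qAW φ ψ)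
  | qexi (p : AP) {φ} : IsNNF φ → IsNNF (QCTL.qexi p φ)
  | qall (p : AP) {φ} : IsNNF φ → IsNNF (QCTL.qall p φ)

/-- `(φ.polarity p).1` holds iff every (free) occurrence of `p` in `φ` is positive
(not in the scope of an odd number of negations); `(φ.polarity p).2` holds iff every
such occurrence is negative. -/
noncomputable def QCTL.polarity {AP : Type} (p : AP) : QCTL AP → Prop × Prop
  | .atom q => (True, q ≠ p)
  | .qneg φ => ((φ.polarity p).2, (φ.polarity p).1)
  | .qor φ ψ => ((φ.polarity p).1 ∧ (ψ.polarity p).1, (φ.polarity p).2 ∧ (ψ.polarity p).2)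
  | .qEX φ => φ.polarity p
  | .qEU φ ψ => ((φ.polarity p).1 ∧ (ψ.polarity p).1, (φ.polarity p).2 ∧ (ψ.polarity p).2)
  | .qAU φ ψ => ((φ.polarity p).1 ∧ (ψ.polarity p).1, (φ.polarity p).2 ∧ (ψ.polarity p).2)
  | .qexi q φ => if q = p then (True, True) else φ.polarity p

/-- `p` occurs only positively in `φ` (never in the scope of a negation). -/
def QCTL.OnlyPos {AP : Type} (p : AP) (φ : QCTL AP) : Prop := (φ.polarity p).1

/-- The body `Φ₀ ∧ ⋀_{i=1..m} AG( κᵢ → θᵢ )` (implication version). -/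
def flatBodyImp {AP : Type} [Inhabited AP] (m : ℕ) (κ : Fin m → AP)
    (Φ0 : QCTL AP) (θ : Fin m → QCTL AP) : QCTL AP :=
  conjList
    ((List.finRange m).map fun i => QCTL.qAG (QCTL.qimp (QCTL.atom (κ i)) (θ i)))
    Φ0


/-!
Only `∃κ.(Φ₀ ∧ ⋀ AG(κᵢ → θᵢ)) ⟹ ∃κ.(Φ₀ ∧ ⋀ AG(κᵢ ↔ θᵢ))` needs an argument. Fix a witness
labelling `K` and consider the operator on labellings `Λ` of the `κᵢ` sending `Λ` to the sets of
states where `θᵢ` holds under `Λ`, or which are not on a path from `x`. Since the `κᵢ` occur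
positively it is monotone, and the `AG(κᵢ → θᵢ)` conjuncts say that the labelling of `K` is a
post-fixpoint. By Knaster–Tarski its greatest fixpoint lies above the labelling of `K`, so `Φ₀`
still holds there by positivity, and being a fixpoint is exactly `AG(κᵢ ↔ θᵢ)`.
-/

namespace Kripke

theorem ext {K₁ K₂ : Kripke AP V} (hE : K₁.E = K₂.E) (hl : K₁.label = K₂.label) : K₁ = K₂ := by
  cases K₁; cases K₂; simp_all

def LeOn (S : Set AP) (K₁ K₂ : Kripke AP V) : Prop :=
  K₁.E = K₂.E ∧ (∀ v r, r ∉ S → (r ∈ K₁.label v ↔ r ∈ K₂.label v)) ∧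
    ∀ v r, r ∈ S → r ∈ K₁.label v → r ∈ K₂.label v

def copyLabel (K K' : Kripke AP V) (p : AP) : Kripke AP V :=
  ⟨K.E, K.serial, fun v => {r | if r = p then r ∈ K'.label v else r ∈ K.label v}⟩

@[simp]
theorem mem_copyLabel {K K' : Kripke AP V} {p r : AP} {v : V} :
    r ∈ (K.copyLabel K' p).label v ↔ if r = p then r ∈ K'.label v else r ∈ K.label v :=
  Iff.rfl

theorem agreeExcept_copyLabel (K K' : Kripke AP V) (p : AP) : K.AgreeExcept (K.copyLabel K' p) p :=
  ⟨rfl, fun v r hr => by simp [hr]⟩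

variable {S : Set AP} {K₁ K₂ : Kripke AP V} {q : AP}

theorem LeOn.copyLabel_left {K₁' : Kripke AP V} (h : K₁.LeOn S K₂) (h' : K₁.AgreeExcept K₁' q) :
    K₁'.LeOn (S \ {q}) (K₂.copyLabel K₁' q) := by
  obtain ⟨hE, hout, hin⟩ := h
  obtain ⟨hE', hl'⟩ := h'
  refine ⟨hE'.trans hE, fun v r hr => ?_, fun v r hr hr₁ => ?_⟩
  · by_cases hrq : r = q
    · simp [hrq]
    · simpa [hrq] using (hl' v r hrq).trans (hout v r fun hrS => hr ⟨hrS, hrq⟩)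
  · have hrq : r ≠ q := hr.2
    simpa [hrq] using hin v r hr.1 ((hl' v r hrq).1 hr₁)

theorem LeOn.copyLabel_right {K₂' : Kripke AP V} (h : K₁.LeOn S K₂) (h' : K₂.AgreeExcept K₂' q) :
    (K₁.copyLabel K₂' q).LeOn (S \ {q}) K₂' := by
  obtain ⟨hE, hout, hin⟩ := h
  obtain ⟨hE', hl'⟩ := h'
  refine ⟨hE.trans hE'.symm, fun v r hr => ?_, fun v r hr hr₁ => ?_⟩
  · by_cases hrq : r = q
    · simp [hrq]
    · simpa [hrq] using (hout v r fun hrS => hr ⟨hrS, hrq⟩).trans (hl' v r hrq).symm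
  · have hrq : r ≠ q := hr.2
    simp only [mem_copyLabel, if_neg hrq] at hr₁
    exact (hl' v r hrq).2 (hin v r hr.1 hr₁)

/-- `v` lies on an infinite path from `x`; this is the form in which `AG` quantifies over
states. -/
def PathReachable (K : Kripke AP V) (x v : V) : Prop :=
  ∃ ρ : ℕ → V, ρ 0 = x ∧ (∀ i, K.E (ρ i) (ρ (i + 1))) ∧ ∃ n, ρ n = v

def relabel (K : Kripke AP V) {m : ℕ} (κ : Fin m → AP) (Λ : Fin m → Set V) : Kripke AP V :=
  ⟨K.E, K.serial, fun v => {r | (∃ i, r = κ i ∧ v ∈ Λ i) ∨ (r ∉ Set.range κ ∧ r ∈ K.label v)}⟩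

variable {K : Kripke AP V} {m : ℕ} {κ : Fin m → AP}

theorem mem_relabel_apply (hκ : Function.Injective κ) {Λ : Fin m → Set V} {i : Fin m} {v : V} :
    κ i ∈ (K.relabel κ Λ).label v ↔ v ∈ Λ i := by
  simp [relabel, hκ.eq_iff]

theorem mem_relabel_of_notMem {Λ : Fin m → Set V} {r : AP} (hr : r ∉ Set.range κ) {v : V} :
    r ∈ (K.relabel κ Λ).label v ↔ r ∈ K.label v := by
  simp only [relabel, Set.mem_ofPred_eq, hr, not_false_eq_true, true_and, or_iff_right_iff_imp]
  rintro ⟨i, rfl, -⟩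
  exact absurd ⟨i, rfl⟩ hr

theorem relabel_self (hκ : Function.Injective κ) :
    K.relabel κ (fun i => {v | κ i ∈ K.label v}) = K := by
  refine ext rfl (funext fun v => Set.ext fun r => ?_)
  by_cases hr : r ∈ Set.range κ
  · obtain ⟨i, rfl⟩ := hr
    exact mem_relabel_apply hκ
  · exact mem_relabel_of_notMem hr

theorem leOn_relabel (hκ : Function.Injective κ) {Λ Λ' : Fin m → Set V} (hΛ : Λ ≤ Λ') :
    (K.relabel κ Λ).LeOn (Set.range κ) (K.relabel κ Λ') := by
  refine ⟨rfl, fun v r hr => ?_, ?_⟩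
  · rw [mem_relabel_of_notMem hr, mem_relabel_of_notMem hr]
  · rintro v r ⟨i, rfl⟩ hv
    rw [mem_relabel_apply hκ] at hv ⊢
    exact hΛ i hv

end Kripke

namespace QCTL

variable {K K' : Kripke AP V} {x : V}

@[simp]
theorem sat_qand {φ ψ : QCTL AP} : (qand φ ψ).sat K x ↔ φ.sat K x ∧ ψ.sat K x := by
  simp [qand, sat]

@[simp]
theorem sat_qimp {φ ψ : QCTL AP} : (qimp φ ψ).sat K x ↔ (φ.sat K x → ψ.sat K x) := by
  simp [qimp, sat, imp_iff_not_or]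

@[simp]
theorem sat_qiff {φ ψ : QCTL AP} : (qiff φ ψ).sat K x ↔ (φ.sat K x ↔ ψ.sat K x) := by
  simp [qiff, iff_iff_implies_and_implies]

theorem sat_qtop [Inhabited AP] : (qtop : QCTL AP).sat K x := by
  simp [qtop, sat, Classical.em]

theorem sat_qAG [Inhabited AP] {φ : QCTL AP} :
    (qAG φ).sat K x ↔ ∀ v, K.PathReachable x v → φ.sat K v := by
  constructor
  · rintro h v ⟨ρ, h0, he, n, rfl⟩
    by_contra hn
    exact h ⟨ρ, h0, he, n, hn, fun _ _ => sat_qtop⟩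
  · rintro h ⟨ρ, h0, he, n, hn, -⟩
    exact hn (h _ ⟨ρ, h0, he, n, rfl⟩)

theorem sat_conjList {l : List (QCTL AP)} {b : QCTL AP} :
    (conjList l b).sat K x ↔ (∀ ψ ∈ l, ψ.sat K x) ∧ b.sat K x := by
  induction l with
  | nil => simp [conjList]
  | cons a l ih =>
    simp only [conjList, List.foldr_cons, sat_qand, List.forall_mem_cons] at ih ⊢
    rw [ih, and_assoc]

theorem sat_exiMany (l : List AP) (φ : QCTL AP) (K : Kripke AP V) (x : V) :
    (exiMany l φ).sat K x ↔ ∃ K' : Kripke AP V, K'.E = K.E ∧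
      (∀ v r, r ∉ l → (r ∈ K'.label v ↔ r ∈ K.label v)) ∧ φ.sat K' x := by
  induction l generalizing K with
  | nil =>
    refine ⟨fun h => ⟨K, rfl, fun _ _ _ => Iff.rfl, h⟩, ?_⟩
    rintro ⟨K', hE, hl, h⟩
    rwa [Kripke.ext hE (funext fun v => Set.ext fun r => hl v r List.not_mem_nil)] at h
  | cons p l ih =>
    change (qexi p (exiMany l φ)).sat K x ↔ _
    constructor
    · rintro ⟨K₁, ⟨hE₁, hl₁⟩, hs⟩
      obtain ⟨K', hE', hl', hs'⟩ := (ih K₁).1 hs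
      refine ⟨K', hE'.trans hE₁, fun v r hr => ?_, hs'⟩
      rw [List.mem_cons, not_or] at hr
      exact (hl' v r hr.2).trans (hl₁ v r hr.1)
    · rintro ⟨K', hE', hl', hs'⟩
      refine ⟨K.copyLabel K' p, K.agreeExcept_copyLabel K' p,
        (ih _).2 ⟨K', hE', fun v r hr => ?_, hs'⟩⟩
      by_cases hrp : r = p
      · simp [hrp]
      · simp [hrp, hl' v r (by simp [hrp, hr])]

theorem sat_qEX_mono {φ φ' : QCTL AP} (hE : K.E = K'.E) (hφ : ∀ v, φ.sat K v → φ'.sat K' v) :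
    (qEX φ).sat K x → (qEX φ').sat K' x :=
  fun ⟨y, hxy, hy⟩ => ⟨y, hE ▸ hxy, hφ y hy⟩

theorem sat_qEU_mono {φ ψ φ' ψ' : QCTL AP} (hE : K.E = K'.E)
    (hφ : ∀ v, φ.sat K v → φ'.sat K' v) (hψ : ∀ v, ψ.sat K v → ψ'.sat K' v) :
    (qEU φ ψ).sat K x → (qEU φ' ψ').sat K' x :=
  fun ⟨ρ, h0, he, i, hi, hlt⟩ =>
    ⟨ρ, h0, fun j => hE ▸ he j, i, hψ _ hi, fun j hj => hφ _ (hlt j hj)⟩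

theorem sat_qAU_mono {φ ψ φ' ψ' : QCTL AP} (hE : K.E = K'.E)
    (hφ : ∀ v, φ.sat K v → φ'.sat K' v) (hψ : ∀ v, ψ.sat K v → ψ'.sat K' v) :
    (qAU φ ψ).sat K x → (qAU φ' ψ').sat K' x := fun h ρ h0 he =>
  let ⟨i, hi, hlt⟩ := h ρ h0 fun j => hE ▸ he j
  ⟨i, hψ _ hi, fun j hj => hφ _ (hlt j hj)⟩

theorem sat_mono_of_leOn (φ : QCTL AP) {S : Set AP} {K₁ K₂ : Kripke AP V} (h : K₁.LeOn S K₂)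
    (x : V) :
    ((∀ p ∈ S, (φ.polarity p).1) → φ.sat K₁ x → φ.sat K₂ x) ∧
      ((∀ p ∈ S, (φ.polarity p).2) → φ.sat K₂ x → φ.sat K₁ x) := by
  induction φ generalizing S K₁ K₂ x with
  | atom q =>
    obtain ⟨-, hout, hin⟩ := h
    refine ⟨fun _ hq => ?_, fun hpol hq => ?_⟩
    · by_cases hqS : q ∈ S
      exacts [hin x q hqS hq, (hout x q hqS).1 hq]
    · exact (hout x q fun hqS => hpol q hqS rfl).2 hq
  | qneg φ ih =>
    exact ⟨fun hpol h₁ h₂ => h₁ ((ih h x).2 hpol h₂), fun hpol h₂ h₁ => h₂ ((ih h x).1 hpol h₁)⟩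
  | qor φ ψ ihφ ihψ =>
    exact ⟨fun hpol => Or.imp ((ihφ h x).1 fun p hp => (hpol p hp).1)
        ((ihψ h x).1 fun p hp => (hpol p hp).2),
      fun hpol => Or.imp ((ihφ h x).2 fun p hp => (hpol p hp).1)
        ((ihψ h x).2 fun p hp => (hpol p hp).2)⟩
  | qEX φ ih =>
    exact ⟨fun hpol => sat_qEX_mono h.1 fun v => (ih h v).1 hpol,
      fun hpol => sat_qEX_mono h.1.symm fun v => (ih h v).2 hpol⟩
  | qEU φ ψ ihφ ihψ =>
    exact ⟨fun hpol => sat_qEU_mono h.1 (fun v => (ihφ h v).1 fun p hp => (hpol p hp).1)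
        (fun v => (ihψ h v).1 fun p hp => (hpol p hp).2),
      fun hpol => sat_qEU_mono h.1.symm (fun v => (ihφ h v).2 fun p hp => (hpol p hp).1)
        (fun v => (ihψ h v).2 fun p hp => (hpol p hp).2)⟩
  | qAU φ ψ ihφ ihψ =>
    exact ⟨fun hpol => sat_qAU_mono h.1 (fun v => (ihφ h v).1 fun p hp => (hpol p hp).1)
        (fun v => (ihψ h v).1 fun p hp => (hpol p hp).2),
      fun hpol => sat_qAU_mono h.1.symm (fun v => (ihφ h v).2 fun p hp => (hpol p hp).1)
        (fun v => (ihψ h v).2 fun p hp => (hpol p hp).2)⟩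
  | qexi q φ ih =>
    -- `q` is rebound, so only the atoms of `S \ {q}` are relevant under the quantifier
    have hpol : ∀ p ∈ S \ {q}, (qexi q φ).polarity p = φ.polarity p := fun p hp => by
      simp [polarity, Ne.symm hp.2]
    refine ⟨fun hS ⟨K₁', h₁', hs⟩ => ⟨K₂.copyLabel K₁' q, K₂.agreeExcept_copyLabel K₁' q, ?_⟩,
      fun hS ⟨K₂', h₂', hs⟩ => ⟨K₁.copyLabel K₂' q, K₁.agreeExcept_copyLabel K₂' q, ?_⟩⟩
    · exact (ih (h.copyLabel_left h₁') x).1 (fun p hp => hpol p hp ▸ hS p hp.1) hs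
    · exact (ih (h.copyLabel_right h₂') x).2 (fun p hp => hpol p hp ▸ hS p hp.1) hs

theorem monotone_sat_relabel {m : ℕ} {κ : Fin m → AP} (hκ : Function.Injective κ)
    {φ : QCTL AP} (hpos : ∀ i, φ.OnlyPos (κ i)) (x : V) :
    Monotone fun Λ : Fin m → Set V => φ.sat (K.relabel κ Λ) x := fun _ _ hΛ =>
  (sat_mono_of_leOn φ (Kripke.leOn_relabel hκ hΛ) x).1 (by rintro _ ⟨i, rfl⟩; exact hpos i)

end QCTL

open QCTL

section Flat

variable [Inhabited AP] {m : ℕ} {κ : Fin m → AP} {Φ0 : QCTL AP} {θ : Fin m → QCTL AP}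
  {K : Kripke AP V} {x : V}

theorem sat_flatBody : (flatBody m κ Φ0 θ).sat K x ↔
    Φ0.sat K x ∧ ∀ i v, K.PathReachable x v → (κ i ∈ K.label v ↔ (θ i).sat K v) := by
  simp [flatBody, sat_conjList, sat_qAG, sat, and_comm]

theorem sat_flatBodyImp : (flatBodyImp m κ Φ0 θ).sat K x ↔
    Φ0.sat K x ∧ ∀ i v, K.PathReachable x v → κ i ∈ K.label v → (θ i).sat K v := by
  simp [flatBodyImp, sat_conjList, sat_qAG, sat, and_comm]

theorem exists_relabel_sat_flatBody (hκ : Function.Injective κ) (hpos0 : ∀ i, Φ0.OnlyPos (κ i))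
    (hposθ : ∀ i j, (θ j).OnlyPos (κ i)) (h : (flatBodyImp m κ Φ0 θ).sat K x) :
    ∃ Λ, (flatBody m κ Φ0 θ).sat (K.relabel κ Λ) x := by
  obtain ⟨hΦ0, himp⟩ := sat_flatBodyImp.1 h
  let F : (Fin m → Set V) →o (Fin m → Set V) :=
    { toFun := fun Λ i => {v | K.PathReachable x v → (θ i).sat (K.relabel κ Λ) v}
      monotone' := fun _ _ hΛ i v hv hx =>
        monotone_sat_relabel hκ (fun j => hposθ j i) v hΛ (hv hx) }
  let Λ₀ : Fin m → Set V := fun i => {v | κ i ∈ K.label v}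
  have hΛ₀ : Λ₀ ≤ F Λ₀ := fun i v hv hx => by
    rw [Kripke.relabel_self hκ]
    exact himp i v hx hv
  refine ⟨OrderHom.gfp F, sat_flatBody.2 ⟨?_, fun i v hx => ?_⟩⟩
  · exact monotone_sat_relabel hκ hpos0 x (OrderHom.le_gfp F hΛ₀)
      (show Φ0.sat (K.relabel κ Λ₀) x by rwa [Kripke.relabel_self hκ])
  · have hfix : F (OrderHom.gfp F) i = OrderHom.gfp F i := congrFun (OrderHom.map_gfp F) i
    rw [Kripke.mem_relabel_apply hκ, ← hfix]
    exact ⟨fun hv => hv hx, fun hv _ => hv⟩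

end Flat

theorem flat_imp_iff_equiv_general {AP : Type} [Inhabited AP]
    (m : ℕ) (κ : Fin m → AP) (Φ0 : QCTL AP) (θ : Fin m → QCTL AP)
    (hκinj : Function.Injective κ)
    (hpos0 : ∀ i, Φ0.OnlyPos (κ i))
    (hposθ : ∀ i j, (θ j).OnlyPos (κ i)) :
    QEquiv (exiMany ((List.finRange m).map κ) (flatBodyImp m κ Φ0 θ))
           (exiMany ((List.finRange m).map κ) (flatBody m κ Φ0 θ)) := by
  intro V _ K x
  rw [sat_exiMany, sat_exiMany]
  constructor
  · rintro ⟨K₁, hE, hout, h⟩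
    obtain ⟨Λ, hΛ⟩ := exists_relabel_sat_flatBody hκinj hpos0 hposθ h
    refine ⟨K₁.relabel κ Λ, hE, fun v r hr => ?_, hΛ⟩
    exact (Kripke.mem_relabel_of_notMem (by simpa using hr)).trans (hout v r hr)
  · rintro ⟨K₁, hE, hout, h⟩
    obtain ⟨hΦ0, hiff⟩ := sat_flatBody.1 h
    exact ⟨K₁, hE, hout, sat_flatBodyImp.2 ⟨hΦ0, fun i v hx => (hiff i v hx).1⟩⟩

/-- Implication versus equivalence in flat NNF formulas: if `Φ₀` and the `θⱼ` are in
negation normal form and each fresh `κᵢ` occurs only positively in them, then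
`∃κ₁…κₘ.( Φ₀ ∧ ⋀ᵢ AG(κᵢ → θᵢ) )  ≡  ∃κ₁…κₘ.( Φ₀ ∧ ⋀ᵢ AG(κᵢ ↔ θᵢ) )`. -/
theorem flat_imp_iff_equiv {AP : Type} [Inhabited AP]
    (m : ℕ) (κ : Fin m → AP) (Φ0 : QCTL AP) (θ : Fin m → QCTL AP)
    (hκinj : Function.Injective κ)
    (hNNF0 : IsNNF Φ0) (hNNFθ : ∀ i, IsNNF (θ i))
    (hpos0 : ∀ i, Φ0.OnlyPos (κ i))
    (hposθ : ∀ i j, (θ j).OnlyPos (κ i)) :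
    QEquiv (exiMany ((List.finRange m).map κ) (flatBodyImp m κ Φ0 θ))
           (exiMany ((List.finRange m).map κ) (flatBody m κ Φ0 θ)) :=
  flat_imp_iff_equiv_general m κ Φ0 θ hκinj hpos0 hposθ
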